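/- Let μ = Σ_{j=1}^n w_j δ_{x_j} with weights w_j > 0 summing to 1 and x_1 ≤ ⋯ ≤ x_n, and let ν satisfy Assumption (A1)-(A3). Then F is a fixed point of the operator A F = F_μ ∘ (φ ∗ (Q_ν ∘ (φ ∗ F))) if and only if F is the CDF of Σ_{j=1}^n w_j δ_{y_j} for points y_1 ≤ ⋯ ≤ y_n solving the nonlinear system ∫_ℝ Q_ν(Σ_{j=1}^n w_j Φ(y_i − y_j − z)) φ(z) dz = x_i for each i ∈ {1,…,n}. -/

import Mathlib

open MeasureTheory ProbabilityTheory Filter Topology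

noncomputable def stdGauss (x : ℝ) : ℝ := Real.exp (-(x ^ 2) / 2) / Real.sqrt (2 * Real.pi)

noncomputable def stdGaussCDF (x : ℝ) : ℝ := ∫ t in Set.Iic x, stdGauss t

noncomputable def quantile (ν : Measure ℝ) (u : ℝ) : ℝ :=
  sInf {x : ℝ | u ≤ ProbabilityTheory.cdf ν x}

def msupport (ν : Measure ℝ) : Set ℝ := {x | ∀ U ∈ nhds x, 0 < ν U}

def IsCDF (F : ℝ → ℝ) : Prop :=
  Monotone F ∧ (∀ x, F x ∈ Set.Icc (0 : ℝ) 1) ∧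
    Filter.Tendsto F Filter.atBot (nhds 0) ∧ Filter.Tendsto F Filter.atTop (nhds 1)

/-- The fixed-point operator `A F = F_μ ∘ (φ ∗ (Q_ν ∘ (φ ∗ F)))`. -/
noncomputable def opA (μ ν : Measure ℝ) (F : ℝ → ℝ) : ℝ → ℝ := fun t =>
  ProbabilityTheory.cdf μ (∫ a, quantile ν (∫ b, F (t - a - b) * stdGauss b) * stdGauss a)

/-! The inner map `G = φ ∗ (Q_ν ∘ (φ ∗ F))`, so that `A F = F_μ ∘ G`, is continuous and
monotone with limits `A` and `B` at `∓∞`, where `[A, B]` is the closed convex hull of `supp ν`: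
it is bounded because `ν` has density at least `c` on it, and `Q_ν` maps `(0, 1)` into `[A, B]`.
Hence `F_μ ∘ G` is the step function jumping by `w_i` at `y_i = min {t | x_i ≤ G t}`, and
`G y_i = x_i`, which is the nonlinear system once `φ ∗ F = ∑ w_j Φ(· - y_j)` is substituted.
Conversely, for such a step function `F` the map `φ ∗ F` is strictly increasing, hence so is
`G` (`Q_ν` is strictly increasing since `F_ν` is continuous), and `x_j ≤ G t ↔ y_j ≤ t`. -/

open Set

lemma stdGauss_eq_gaussianPDFReal : stdGauss = gaussianPDFReal 0 1 := by
  ext x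
  simp [stdGauss, gaussianPDFReal, div_eq_inv_mul, mul_comm]

lemma stdGauss_pos (x : ℝ) : 0 < stdGauss x :=
  stdGauss_eq_gaussianPDFReal ▸ gaussianPDFReal_pos 0 1 x one_ne_zero

lemma integrable_stdGauss : Integrable stdGauss :=
  stdGauss_eq_gaussianPDFReal ▸ integrable_gaussianPDFReal 0 1

lemma integral_stdGauss : ∫ x, stdGauss x = 1 :=
  stdGauss_eq_gaussianPDFReal ▸ integral_gaussianPDFReal_eq_one 0 one_ne_zero

lemma continuous_stdGauss : Continuous stdGauss := by
  unfold stdGauss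
  fun_prop

lemma stdGauss_sub_le_of_abs_sub_le_one {t t₀ u : ℝ} (h : |t - t₀| ≤ 1) :
    stdGauss (t - u) ≤ Real.exp 1 * Real.exp (-(1 / 4) * (t₀ - u) ^ 2) / √(2 * Real.pi) := by
  rw [stdGauss, div_le_div_iff_of_pos_right (by positivity), ← Real.exp_add]
  apply Real.exp_le_exp.2
  -- `(t - u)² ≥ (t₀ - u)² / 2 - (t - t₀)²`
  have h2 : (t - t₀) ^ 2 ≤ 1 := by nlinarith [abs_nonneg (t - t₀), sq_abs (t - t₀)]
  nlinarith [sq_nonneg ((t₀ - u) - 2 * (t - u))]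

lemma integral_mul_stdGauss_pos {g : ℝ → ℝ} (hg : Integrable fun a => g a * stdGauss a)
    (h0 : 0 ≤ g) {s : Set ℝ} (hs : 0 < volume s) (hpos : ∀ a ∈ s, 0 < g a) :
    0 < ∫ a, g a * stdGauss a := by
  rw [integral_pos_iff_support_of_nonneg (fun a => mul_nonneg (h0 a) (stdGauss_pos a).le) hg]
  exact hs.trans_le (measure_mono fun a ha => (mul_pos (hpos a ha) (stdGauss_pos a)).ne')

lemma stdGaussCDF_strictMono : StrictMono stdGaussCDF := by
  intro a b hab
  have hsplit : stdGaussCDF b = stdGaussCDF a + ∫ t in Ioc a b, stdGauss t := by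
    rw [stdGaussCDF, stdGaussCDF, ← setIntegral_union (Iic_disjoint_Ioc le_rfl) measurableSet_Ioc
      integrable_stdGauss.integrableOn integrable_stdGauss.integrableOn,
      Iic_union_Ioc_eq_Iic hab.le]
  have hsupp : Function.support stdGauss = univ :=
    eq_univ_of_forall fun t => (stdGauss_pos t).ne'
  rw [hsplit, lt_add_iff_pos_right, setIntegral_pos_iff_support_of_nonneg_ae
    (Eventually.of_forall fun t => (stdGauss_pos t).le) integrable_stdGauss.integrableOn, hsupp,
    univ_inter]
  simpa using hab

noncomputable def gaussConv (k : ℝ → ℝ) (t : ℝ) : ℝ := ∫ a, k (t - a) * stdGauss a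

section GaussConv

variable {k : ℝ → ℝ} {M : ℝ}

lemma integrable_mul_stdGauss {g : ℝ → ℝ} (hg : Measurable g) (hM : ∀ a, |g a| ≤ M) :
    Integrable fun a => g a * stdGauss a :=
  integrable_stdGauss.bdd_mul hg.aestronglyMeasurable (Eventually.of_forall hM)

lemma integrable_gaussConv_integrand (hk : Measurable k) (hM : ∀ u, |k u| ≤ M) (t : ℝ) :
    Integrable fun a => k (t - a) * stdGauss a :=
  integrable_mul_stdGauss (hk.comp (measurable_const.sub measurable_id)) fun _ => hM _

lemma monotone_gaussConv (hk : Monotone k) (hM : ∀ u, |k u| ≤ M) : Monotone (gaussConv k) :=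
  fun _ _ hst => integral_mono (integrable_gaussConv_integrand hk.measurable hM _)
    (integrable_gaussConv_integrand hk.measurable hM _)
    fun a => mul_le_mul_of_nonneg_right (hk (by linarith)) (stdGauss_pos a).le

lemma strictMono_gaussConv (hk : StrictMono k) (hM : ∀ u, |k u| ≤ M) :
    StrictMono (gaussConv k) := by
  intro t t' htt'
  have hint := integrable_gaussConv_integrand hk.monotone.measurable hM
  have hdiff : gaussConv k t' - gaussConv k t = ∫ a, (k (t' - a) - k (t - a)) * stdGauss a := by
    simp only [gaussConv, sub_mul]
    exact (integral_sub (hint t') (hint t)).symm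
  have hpos : 0 < ∫ a, (k (t' - a) - k (t - a)) * stdGauss a :=
    integral_mul_stdGauss_pos (by simpa only [sub_mul] using (hint t').sub' (hint t))
      (fun a => sub_nonneg.2 (hk.monotone (by linarith))) (s := univ) (by simp)
      fun a _ => sub_pos.2 (hk (by linarith))
  linarith

lemma tendsto_gaussConv (hk : Measurable k) (hM : ∀ u, |k u| ≤ M) {l : Filter ℝ}
    [l.IsCountablyGenerated] {L : ℝ}
    (hl : ∀ a, Tendsto (fun t => t - a) l l) (h : Tendsto k l (𝓝 L)) :
    Tendsto (gaussConv k) l (𝓝 L) := by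
  have hlim := tendsto_integral_filter_of_dominated_convergence (fun a => M * stdGauss a)
    (Eventually.of_forall fun t => (integrable_gaussConv_integrand hk hM t).aestronglyMeasurable)
    (Eventually.of_forall fun t => Eventually.of_forall fun a => by
      rw [norm_mul, Real.norm_of_nonneg (stdGauss_pos a).le]
      exact mul_le_mul_of_nonneg_right (hM _) (stdGauss_pos a).le)
    (integrable_stdGauss.const_mul M)
    (Eventually.of_forall fun a => ((h.comp (hl a)).mul_const (stdGauss a)))
  rwa [integral_const_mul, integral_stdGauss, mul_one] at hlim

lemma continuous_gaussConv (hk : Measurable k) (hM : ∀ u, |k u| ≤ M) :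
    Continuous (gaussConv k) := by
  have hswap : gaussConv k = fun t => ∫ u, k u * stdGauss (t - u) := funext fun t => by
    rw [gaussConv, ← integral_sub_left_eq_self _ volume t]
    simp only [sub_sub_cancel]
  rw [hswap, continuous_iff_continuousAt]
  intro t₀
  refine continuousAt_of_dominated (bound := fun u =>
      M * (Real.exp 1 * Real.exp (-(1 / 4) * (t₀ - u) ^ 2) / √(2 * Real.pi))) ?_ ?_ ?_ ?_
  · exact Eventually.of_forall fun t => (hk.mul (continuous_stdGauss.comp
      (continuous_const.sub continuous_id)).measurable).aestronglyMeasurable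
  · filter_upwards [eventually_abs_sub_lt t₀ one_pos] with t ht
    refine Eventually.of_forall fun u => ?_
    rw [norm_mul, Real.norm_of_nonneg (stdGauss_pos _).le]
    exact mul_le_mul (hM u) (stdGauss_sub_le_of_abs_sub_le_one ht.le) (stdGauss_pos _).le
      ((abs_nonneg _).trans (hM u))
  · exact ((((integrable_exp_neg_mul_sq (by norm_num : (0 : ℝ) < 1 / 4)).comp_sub_left
      t₀).const_mul _).div_const _).const_mul M
  · exact Eventually.of_forall fun u =>
      ((continuous_stdGauss.comp (continuous_id.sub continuous_const)).continuousAt).const_mul _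

end GaussConv

lemma abs_le_one_of_isCDF {F : ℝ → ℝ} (hF : IsCDF F) (u : ℝ) : |F u| ≤ 1 :=
  abs_le.2 ⟨by linarith [(hF.2.1 u).1], (hF.2.1 u).2⟩

lemma gaussConv_mem_Ioo_of_isCDF {F : ℝ → ℝ} (hF : IsCDF F) (s : ℝ) :
    gaussConv F s ∈ Ioo 0 1 := by
  have hint := integrable_gaussConv_integrand hF.1.measurable (abs_le_one_of_isCDF hF) s
  obtain ⟨p, hp⟩ := (hF.2.2.2.eventually (eventually_gt_nhds one_pos)).exists
  obtain ⟨q, hq⟩ := (hF.2.2.1.eventually (eventually_lt_nhds one_pos)).exists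
  constructor
  · refine integral_mul_stdGauss_pos hint (fun a => (hF.2.1 _).1) (s := Iic (s - p)) (by simp)
      fun a ha => hp.trans_le (hF.1 (by linarith [mem_Iic.1 ha]))
  · have hcompl : 1 - gaussConv F s = ∫ a, (1 - F (s - a)) * stdGauss a := by
      simp only [gaussConv, sub_mul, one_mul]
      rw [integral_sub integrable_stdGauss hint, integral_stdGauss]
    have hpos : 0 < ∫ a, (1 - F (s - a)) * stdGauss a :=
      integral_mul_stdGauss_pos
        (by simpa only [sub_mul, one_mul] using integrable_stdGauss.sub' hint)
        (fun a => sub_nonneg.2 (hF.2.1 _).2) (s := Ici (s - q)) (by simp)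
        fun a ha => sub_pos.2 ((hF.1 (by linarith [mem_Ici.1 ha])).trans_lt hq)
    linarith

lemma gaussConv_eq_sum_stdGaussCDF {ι : Type*} [Fintype ι] {F : ℝ → ℝ} {y w : ι → ℝ}
    (hF : ∀ t, F t = ∑ j, if y j ≤ t then w j else 0) (s : ℝ) :
    gaussConv F s = ∑ j, w j * stdGaussCDF (s - y j) := by
  have hind : ∀ j a, (if y j ≤ s - a then w j else 0) * stdGauss a
      = (Iic (s - y j)).indicator (fun a => w j * stdGauss a) a := by
    intro j a
    by_cases h : y j ≤ s - a
    · rw [if_pos h, indicator_of_mem (by rw [mem_Iic]; linarith)]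
    · rw [if_neg h, indicator_of_notMem (by rw [mem_Iic]; intro; exact h (by linarith)), zero_mul]
  simp only [gaussConv, hF, Finset.sum_mul, hind]
  rw [integral_finsetSum _ fun j _ =>
    (integrable_stdGauss.const_mul (w j)).indicator measurableSet_Iic]
  simp only [integral_indicator measurableSet_Iic, integral_const_mul, stdGaussCDF]

lemma strictMono_sum_stdGaussCDF {ι : Type*} [Fintype ι] [Nonempty ι] {y w : ι → ℝ}
    (hw : ∀ j, 0 < w j) : StrictMono fun s => ∑ j, w j * stdGaussCDF (s - y j) :=
  fun _ _ hst => Finset.sum_lt_sum_of_nonempty Finset.univ_nonempty fun j _ =>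
    mul_lt_mul_of_pos_left (stdGaussCDF_strictMono (by linarith)) (hw j)

lemma Monotone.exists_eq_and_le_iff_of_continuous {G : ℝ → ℝ} (hmono : Monotone G)
    (hG : Continuous G) {x : ℝ} (hlo : ∃ t, G t < x) (hhi : ∃ t, x ≤ G t) :
    ∃ y, G y = x ∧ ∀ t, x ≤ G t ↔ y ≤ t := by
  obtain ⟨a, ha⟩ := hlo
  obtain ⟨b, hb⟩ := hhi
  set S := {t | x ≤ G t}
  have hbdd : BddBelow S :=
    ⟨a, fun s hs => le_of_not_gt fun hsa => ((hmono hsa.le).trans_lt ha).not_ge hs⟩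
  have hmem : sInf S ∈ S := (isClosed_le continuous_const hG).csInf_mem ⟨b, hb⟩ hbdd
  obtain ⟨z, hz⟩ : ∃ z, G z = x := intermediate_value_univ a b hG ⟨ha.le, hb⟩
  exact ⟨sInf S, le_antisymm ((hmono (csInf_le hbdd hz.ge)).trans hz.le) hmem,
    fun t => ⟨fun ht => csInf_le hbdd ht, fun ht => hmem.trans (hmono ht)⟩⟩

lemma msupport_eq_support (ν : Measure ℝ) : msupport ν = ν.support :=
  ext fun x => (Measure.mem_support_iff_forall x).symm

lemma continuous_cdf_of_measure_singleton (ν : Measure ℝ) [IsProbabilityMeasure ν]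
    (h0 : ∀ a, ν {a} = 0) : Continuous (cdf ν) := by
  refine continuous_iff_continuousAt.2 fun a => ?_
  rw [(monotone_cdf ν).continuousAt_iff_leftLim_eq_rightLim]
  have hr : Function.rightLim (cdf ν) a = cdf ν a :=
    rightLim_eq_of_tendsto (((cdf ν).right_continuous a).tendsto.mono_left
      (nhdsWithin_mono _ Ioi_subset_Ici_self))
  have hl : Function.leftLim (cdf ν) a = cdf ν a := by
    have hm := (cdf ν).measure_singleton a
    rw [measure_cdf, h0 a, eq_comm, ENNReal.ofReal_eq_zero] at hm
    linarith [(monotone_cdf ν).leftLim_le (le_refl a)]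
  rw [hr, hl]

section Density

variable {ν : Measure ℝ} {S : Set ℝ} {c : ℝ}

lemma mul_volume_real_le_of_le_rnDeriv [IsFiniteMeasure ν] (hac : ν ≪ volume)
    (hS : ∀ᵐ z ∂volume, z ∈ S → c ≤ (ν.rnDeriv volume z).toReal)
    {s : Set ℝ} (hs : MeasurableSet s) (hsS : s ⊆ S) (hfin : volume s ≠ ⊤) :
    c * volume.real s ≤ ν.real s := by
  calc c * volume.real s = ∫ _ in s, c := by rw [setIntegral_const, smul_eq_mul, mul_comm]
    _ ≤ ∫ z in s, (ν.rnDeriv volume z).toReal :=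
      setIntegral_mono_on_ae (integrableOn_const hfin)
        Measure.integrable_toReal_rnDeriv.integrableOn hs
        (by filter_upwards [hS] with z hz hzs using hz (hsS hzs))
    _ = ν.real s := Measure.setIntegral_toReal_rnDeriv hac s

variable [IsProbabilityMeasure ν]

lemma isBounded_of_le_rnDeriv (hac : ν ≪ volume) (hc : 0 < c) (hSconv : S.OrdConnected)
    (hS : ∀ᵐ z ∂volume, z ∈ S → c ≤ (ν.rnDeriv volume z).toReal) :
    Bornology.IsBounded S := by
  rcases S.eq_empty_or_nonempty with rfl | ⟨k₀, hk₀⟩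
  · exact Bornology.isBounded_empty
  refine Metric.isBounded_closedBall (x := k₀) (r := 1 / c) |>.subset fun k hk => ?_
  have hle := mul_volume_real_le_of_le_rnDeriv hac hS measurableSet_uIcc
    (hSconv.uIcc_subset hk₀ hk) (by simp [Real.volume_interval])
  rw [Real.volume_real_interval] at hle
  rw [Metric.mem_closedBall, Real.dist_eq, le_div_iff₀ hc]
  linarith [measureReal_le_one (μ := ν) (s := uIcc k₀ k)]

lemma exists_cdf_strictMonoOn (hac : ν ≪ volume) (hc : 0 < c)
    (hdens : ∀ᵐ z ∂volume, z ∈ convexHull ℝ ν.support →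
      c ≤ (ν.rnDeriv volume z).toReal) :
    ∃ A B, convexHull ℝ ν.support ⊆ Icc A B ∧ cdf ν A = 0 ∧ cdf ν B = 1 ∧
      StrictMonoOn (cdf ν) (Icc A B) := by
  set K := convexHull ℝ ν.support
  have hKconn : K.OrdConnected := (convex_convexHull ℝ _).ordConnected
  have hK := isBounded_of_le_rnDeriv hac hc hKconn hdens
  have hKne : K.Nonempty :=
    (Measure.nonempty_support (IsProbabilityMeasure.ne_zero ν)).mono (subset_convexHull ℝ _)
  set A := sInf K
  set B := sSup K
  have hKIcc : K ⊆ Icc A B := subset_Icc_csInf_csSup hK.bddBelow hK.bddAbove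
  have hIooK : Ioo A B ⊆ K := fun z hz => by
    obtain ⟨k₁, hk₁, hk₁z⟩ := (csInf_lt_iff hK.bddBelow hKne).1 hz.1
    obtain ⟨k₂, hk₂, hzk₂⟩ := (lt_csSup_iff hK.bddAbove hKne).1 hz.2
    exact hKconn.out hk₁ hk₂ ⟨hk₁z.le, hzk₂.le⟩
  have hnull : ν (Icc A B)ᶜ = 0 := measure_mono_null
    (compl_subset_compl.2 ((subset_convexHull ℝ _).trans hKIcc)) Measure.measure_compl_support
  refine ⟨A, B, hKIcc, ?_, ?_, ?_⟩
  · have hIic : ν (Iic A) = 0 := by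
      refine measure_mono_null (fun t ht => ?_)
        (measure_union_null hnull (hac (Real.volume_singleton (a := A))))
      rcases (mem_Iic.1 ht).lt_or_eq with htA | rfl
      · exact Or.inl fun h => (h.1.trans_lt htA).false
      · exact Or.inr rfl
    rw [cdf_eq_real, measureReal_def, hIic, ENNReal.toReal_zero]
  · have hIic : ν (Iic B) = 1 := (prob_compl_eq_zero_iff measurableSet_Iic).1
      (measure_mono_null (compl_subset_compl.2 Icc_subset_Iic_self) hnull)
    rw [cdf_eq_real, measureReal_def, hIic, ENNReal.toReal_one]
  · intro u hu v hv huv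
    have hle := mul_volume_real_le_of_le_rnDeriv hac hdens measurableSet_Ioo
      ((Ioo_subset_Ioo hu.1 hv.2).trans hIooK) (by simp)
    rw [Real.volume_real_Ioo_of_le huv.le] at hle
    have hIoc : ν.real (Ioc u v) = cdf ν v - cdf ν u := by
      have h := (cdf ν).measure_Ioc u v
      rw [measure_cdf] at h
      rw [measureReal_def, h, ENNReal.toReal_ofReal (sub_nonneg.2 (monotone_cdf ν huv.le))]
    have hmono : ν.real (Ioo u v) ≤ ν.real (Ioc u v) := measureReal_mono Ioo_subset_Ioc_self
    nlinarith

end Density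

section Quantile

variable {ν : Measure ℝ} {A B u : ℝ}

lemma le_of_pos_le_cdf (h0 : cdf ν A = 0) (hu : 0 < u) {x : ℝ} (hx : u ≤ cdf ν x) : A ≤ x :=
  le_of_not_gt fun hxA => by
    have := monotone_cdf ν hxA.le
    linarith

lemma lt_of_cdf_eq_zero_of_cdf_eq_one (h0 : cdf ν A = 0) (h1 : cdf ν B = 1) : A < B :=
  lt_of_not_ge fun hBA => by linarith [monotone_cdf ν hBA]

lemma bddBelow_setOf_le_cdf (h0 : cdf ν A = 0) (hu : 0 < u) : BddBelow {x | u ≤ cdf ν x} :=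
  ⟨A, fun _ => le_of_pos_le_cdf h0 hu⟩

lemma quantile_mem_Icc (h0 : cdf ν A = 0) (h1 : cdf ν B = 1) (hu : u ∈ Ioc 0 1) :
    quantile ν u ∈ Icc A B :=
  ⟨le_csInf ⟨B, by simpa [h1] using hu.2⟩ fun _ => le_of_pos_le_cdf h0 hu.1,
    csInf_le (bddBelow_setOf_le_cdf h0 hu.1) (by simpa [h1] using hu.2)⟩

lemma cdf_quantile (hcont : Continuous (cdf ν)) (h0 : cdf ν A = 0) (h1 : cdf ν B = 1)
    (hu : u ∈ Ioc 0 1) : cdf ν (quantile ν u) = u := by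
  have hbdd := bddBelow_setOf_le_cdf h0 hu.1
  refine le_antisymm (le_of_tendsto ((hcont.tendsto _).mono_left
    (nhdsWithin_le_nhds (s := Iio (quantile ν u))))
    (eventually_nhdsWithin_of_forall fun x hx => ?_)) ?_
  · exact (not_le.1 (notMem_of_lt_csInf (s := {x | u ≤ cdf ν x}) hx hbdd)).le
  · exact (isClosed_le continuous_const hcont).csInf_mem ⟨B, by simpa [h1] using hu.2⟩ hbdd

variable (hcont : Continuous (cdf ν)) (h0 : cdf ν A = 0) (h1 : cdf ν B = 1)
include hcont h0 h1

lemma quantile_strictMonoOn : StrictMonoOn (quantile ν) (Ioc 0 1) := fun u hu v hv huv =>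
  lt_of_not_ge fun hvu => by
    linarith [monotone_cdf ν hvu, cdf_quantile hcont h0 h1 hu, cdf_quantile hcont h0 h1 hv]

lemma tendsto_quantile_nhdsGT_zero (hstrict : StrictMonoOn (cdf ν) (Icc A B)) :
    Tendsto (quantile ν) (𝓝[>] 0) (𝓝 A) := by
  have hAB := lt_of_cdf_eq_zero_of_cdf_eq_one h0 h1
  refine tendsto_order.2 ⟨fun a ha => ?_, fun b hb => ?_⟩
  · filter_upwards [Ioo_mem_nhdsGT one_pos] with u hu
    exact ha.trans_le (quantile_mem_Icc h0 h1 (Ioo_subset_Ioc_self hu)).1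
  · set t := min B b
    have ht : t ∈ Icc A B := ⟨le_min hAB.le hb.le, min_le_left _ _⟩
    have hpos : 0 < cdf ν t := h0 ▸ hstrict ⟨le_rfl, hAB.le⟩ ht (lt_min hAB hb)
    filter_upwards [Ioo_mem_nhdsGT hpos] with u hu
    have hu' : u ∈ Ioc 0 1 := ⟨hu.1, hu.2.le.trans (cdf_le_one _ _)⟩
    refine lt_of_lt_of_le (lt_of_not_ge fun htq => ?_) (min_le_right B b)
    linarith [monotone_cdf ν htq, cdf_quantile hcont h0 h1 hu', hu.2]

lemma tendsto_quantile_nhdsLT_one (hstrict : StrictMonoOn (cdf ν) (Icc A B)) :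
    Tendsto (quantile ν) (𝓝[<] 1) (𝓝 B) := by
  have hAB := lt_of_cdf_eq_zero_of_cdf_eq_one h0 h1
  refine tendsto_order.2 ⟨fun a ha => ?_, fun b hb => ?_⟩
  · set t := max A a
    have ht : t ∈ Icc A B := ⟨le_max_left _ _, max_le hAB.le ha.le⟩
    have hlt : cdf ν t < 1 := h1 ▸ hstrict ht ⟨hAB.le, le_rfl⟩ (max_lt hAB ha)
    filter_upwards [Ioo_mem_nhdsLT hlt] with u hu
    have hu' : u ∈ Ioc 0 1 := ⟨(cdf_nonneg _ _).trans_lt hu.1, hu.2.le⟩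
    refine lt_of_le_of_lt (le_max_right A a) (lt_of_not_ge fun hqt => ?_)
    linarith [monotone_cdf ν hqt, cdf_quantile hcont h0 h1 hu', hu.1]
  · filter_upwards [Ioo_mem_nhdsLT zero_lt_one] with u hu
    exact (quantile_mem_Icc h0 h1 (Ioo_subset_Ioc_self hu)).2.trans_lt hb

end Quantile

section DiracSum

variable {ι : Type*} [Fintype ι] {w x : ι → ℝ}

lemma isProbabilityMeasure_sum_dirac (hw : ∀ j, 0 < w j) (hw1 : ∑ j, w j = 1) :
    IsProbabilityMeasure (∑ j, ENNReal.ofReal (w j) • Measure.dirac (x j)) := by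
  constructor
  simp only [Measure.finsetSum_apply, Measure.smul_apply, smul_eq_mul,
    Measure.dirac_apply_of_mem (mem_univ _), mul_one]
  rw [← ENNReal.ofReal_sum_of_nonneg fun j _ => (hw j).le, hw1, ENNReal.ofReal_one]

lemma cdf_sum_dirac (hw : ∀ j, 0 < w j) (hw1 : ∑ j, w j = 1) (t : ℝ) :
    cdf (∑ j, ENNReal.ofReal (w j) • Measure.dirac (x j)) t =
      ∑ j, if x j ≤ t then w j else 0 := by
  have := isProbabilityMeasure_sum_dirac (x := x) hw hw1
  rw [cdf_eq_real, measureReal_def, Measure.finsetSum_apply,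
    ENNReal.toReal_sum fun j _ => by
      rw [Measure.smul_apply, smul_eq_mul]
      exact ENNReal.mul_ne_top ENNReal.ofReal_ne_top (measure_ne_top _ _)]
  refine Finset.sum_congr rfl fun j _ => ?_
  rw [Measure.smul_apply, smul_eq_mul, Measure.dirac_apply' _ measurableSet_Iic]
  by_cases h : x j ≤ t
  · simp [h, (hw j).le]
  · simp [h]

lemma mem_msupport_sum_dirac (hw : ∀ j, 0 < w j) (i : ι) :
    x i ∈ msupport (∑ j, ENNReal.ofReal (w j) • Measure.dirac (x j)) := fun U hU => by
  have hle : ENNReal.ofReal (w i) * Measure.dirac (x i) U ≤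
      (∑ j, ENNReal.ofReal (w j) • Measure.dirac (x j)) U := by
    rw [Measure.finsetSum_apply]
    exact Finset.single_le_sum (f := fun j => (ENNReal.ofReal (w j) • Measure.dirac (x j)) U)
      (fun j _ => zero_le) (Finset.mem_univ i)
  rw [Measure.dirac_apply_of_mem (mem_of_mem_nhds hU), mul_one] at hle
  exact (ENNReal.ofReal_pos.2 (hw i)).trans_le hle

end DiracSum

noncomputable def innerMap (ν : Measure ℝ) (F : ℝ → ℝ) : ℝ → ℝ :=
  gaussConv fun s => quantile ν (gaussConv F s)

lemma opA_eq_cdf_innerMap (μ ν : Measure ℝ) (F : ℝ → ℝ) (t : ℝ) :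
    opA μ ν F t = cdf μ (innerMap ν F t) := rfl

lemma integral_quantile_sum_stdGaussCDF_eq_innerMap {ι : Type*} [Fintype ι] {ν : Measure ℝ}
    {F : ℝ → ℝ} {y w : ι → ℝ} (hF : ∀ t, F t = ∑ j, if y j ≤ t then w j else 0)
    (s : ℝ) :
    ∫ z, quantile ν (∑ j, w j * stdGaussCDF (s - y j - z)) * stdGauss z = innerMap ν F s := by
  simp only [innerMap, gaussConv_eq_sum_stdGaussCDF hF, sub_right_comm s]
  rfl

lemma abs_quantile_gaussConv_le {ν : Measure ℝ} {A B : ℝ} {F : ℝ → ℝ} (h0 : cdf ν A = 0)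
    (h1 : cdf ν B = 1) (hF : IsCDF F) (s : ℝ) : |quantile ν (gaussConv F s)| ≤ max |A| |B| :=
  have hq := quantile_mem_Icc h0 h1 (Ioo_subset_Ioc_self (gaussConv_mem_Ioo_of_isCDF hF s))
  abs_le_max_abs_abs hq.1 hq.2

section InnerMap

variable {ν : Measure ℝ} {A B : ℝ} {F : ℝ → ℝ}
  (hcont : Continuous (cdf ν)) (h0 : cdf ν A = 0) (h1 : cdf ν B = 1) (hF : IsCDF F)
include hcont h0 h1 hF

lemma monotone_quantile_gaussConv : Monotone fun s => quantile ν (gaussConv F s) :=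
  fun _ _ hst => (quantile_strictMonoOn hcont h0 h1).monotoneOn
    (Ioo_subset_Ioc_self (gaussConv_mem_Ioo_of_isCDF hF _))
    (Ioo_subset_Ioc_self (gaussConv_mem_Ioo_of_isCDF hF _))
    (monotone_gaussConv hF.1 (abs_le_one_of_isCDF hF) hst)

lemma monotone_innerMap : Monotone (innerMap ν F) :=
  monotone_gaussConv (monotone_quantile_gaussConv hcont h0 h1 hF)
    (abs_quantile_gaussConv_le h0 h1 hF)

lemma continuous_innerMap : Continuous (innerMap ν F) :=
  continuous_gaussConv (monotone_quantile_gaussConv hcont h0 h1 hF).measurable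
    (abs_quantile_gaussConv_le h0 h1 hF)

variable (hstrict : StrictMonoOn (cdf ν) (Icc A B))
include hstrict

lemma tendsto_innerMap_atTop : Tendsto (innerMap ν F) atTop (𝓝 B) := by
  have hk : Tendsto (fun s => quantile ν (gaussConv F s)) atTop (𝓝 B) :=
    (tendsto_quantile_nhdsLT_one hcont h0 h1 hstrict).comp (tendsto_nhdsWithin_iff.2
      ⟨tendsto_gaussConv hF.1.measurable (abs_le_one_of_isCDF hF)
        (fun a => tendsto_atTop_add_const_right _ _ tendsto_id) hF.2.2.2,
      Eventually.of_forall fun s => (gaussConv_mem_Ioo_of_isCDF hF s).2⟩)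
  exact tendsto_gaussConv (monotone_quantile_gaussConv hcont h0 h1 hF).measurable
    (abs_quantile_gaussConv_le h0 h1 hF)
    (fun a => tendsto_atTop_add_const_right _ _ tendsto_id) hk

lemma tendsto_innerMap_atBot : Tendsto (innerMap ν F) atBot (𝓝 A) := by
  have hk : Tendsto (fun s => quantile ν (gaussConv F s)) atBot (𝓝 A) :=
    (tendsto_quantile_nhdsGT_zero hcont h0 h1 hstrict).comp (tendsto_nhdsWithin_iff.2
      ⟨tendsto_gaussConv hF.1.measurable (abs_le_one_of_isCDF hF)
        (fun a => tendsto_atBot_add_const_right _ _ tendsto_id) hF.2.2.1,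
      Eventually.of_forall fun s => (gaussConv_mem_Ioo_of_isCDF hF s).1⟩)
  exact tendsto_gaussConv (monotone_quantile_gaussConv hcont h0 h1 hF).measurable
    (abs_quantile_gaussConv_le h0 h1 hF)
    (fun a => tendsto_atBot_add_const_right _ _ tendsto_id) hk

lemma exists_innerMap_eq_and_le_iff {x : ℝ} (hx : x ∈ Ioo A B) :
    ∃ y, innerMap ν F y = x ∧ ∀ t, x ≤ innerMap ν F t ↔ y ≤ t :=
  (monotone_innerMap hcont h0 h1 hF).exists_eq_and_le_iff_of_continuous
    (continuous_innerMap hcont h0 h1 hF)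
    ((tendsto_innerMap_atBot hcont h0 h1 hF hstrict).eventually (eventually_lt_nhds hx.1)).exists
    ((tendsto_innerMap_atTop hcont h0 h1 hF hstrict).eventually (eventually_ge_nhds hx.2)).exists

end InnerMap

lemma strictMono_innerMap {ι : Type*} [Fintype ι] [Nonempty ι] {ν : Measure ℝ} {A B : ℝ}
    {F : ℝ → ℝ} {y w : ι → ℝ} (hcont : Continuous (cdf ν)) (h0 : cdf ν A = 0)
    (h1 : cdf ν B = 1) (hF : IsCDF F) (hw : ∀ j, 0 < w j)
    (hstep : ∀ t, F t = ∑ j, if y j ≤ t then w j else 0) :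
    StrictMono (innerMap ν F) := by
  refine strictMono_gaussConv (fun s t hst => quantile_strictMonoOn hcont h0 h1
    (Ioo_subset_Ioc_self (gaussConv_mem_Ioo_of_isCDF hF _))
    (Ioo_subset_Ioc_self (gaussConv_mem_Ioo_of_isCDF hF _)) ?_)
    (abs_quantile_gaussConv_le h0 h1 hF)
  simp only [gaussConv_eq_sum_stdGaussCDF hstep]
  exact strictMono_sum_stdGaussCDF hw hst

theorem stmt_16_general (n : ℕ) (w : Fin n → ℝ) (x : Fin n → ℝ)
    (hw : ∀ j, 0 < w j) (hw1 : ∑ j, w j = 1) (hx : Monotone x)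
    (μ ν : Measure ℝ) [IsProbabilityMeasure ν]
    (hμ : μ = ∑ j, ENNReal.ofReal (w j) • Measure.dirac (x j))
    (hA1 : ν ≪ volume)
    (hA2 : msupport μ ⊆ interior (convexHull ℝ (msupport ν)))
    (c : ℝ) (hc : 0 < c)
    (hA3 : ∀ᵐ z ∂volume, z ∈ convexHull ℝ (msupport ν) →
      c ≤ (ν.rnDeriv volume z).toReal)
    (F : ℝ → ℝ) (hF : IsCDF F) :
    (∀ t, opA μ ν F t = F t) ↔
      ∃ y : Fin n → ℝ, Monotone y ∧
        (∀ t, F t = ∑ j, if y j ≤ t then w j else 0) ∧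
        (∀ i, ∫ z, quantile ν (∑ j, w j * stdGaussCDF (y i - y j - z)) * stdGauss z
          = x i) := by
  rw [msupport_eq_support ν] at hA2 hA3
  obtain ⟨A, B, hKAB, h0, h1, hstrict⟩ := exists_cdf_strictMonoOn hA1 hc hA3
  have hcont := continuous_cdf_of_measure_singleton ν fun a => hA1 (Real.volume_singleton (a := a))
  have hxAB : ∀ i, x i ∈ Ioo A B := fun i =>
    interior_Icc (a := A) ▸ interior_mono hKAB (hA2 (hμ ▸ mem_msupport_sum_dirac hw i))
  have hopA : ∀ t, opA μ ν F t = ∑ j, if x j ≤ innerMap ν F t then w j else 0 := by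
    intro t
    rw [opA_eq_cdf_innerMap, hμ, cdf_sum_dirac hw hw1]
  constructor
  · intro hfix
    choose y hyx hy using fun i => exists_innerMap_eq_and_le_iff hcont h0 h1 hF hstrict (hxAB i)
    have hstep : ∀ t, F t = ∑ j, if y j ≤ t then w j else 0 := fun t => by
      simp only [← hfix t, hopA, hy]
    refine ⟨y, fun i i' hii' => (hy i _).1 ((hx hii').trans ((hy i' _).2 le_rfl)), hstep,
      fun i => ?_⟩
    rw [integral_quantile_sum_stdGaussCDF_eq_innerMap hstep, hyx]
  · rintro ⟨y, -, hstep, hsolve⟩ t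
    have : Nonempty (Fin n) := by
      obtain ⟨j, -, -⟩ := Finset.exists_ne_zero_of_sum_ne_zero (hw1 ▸ one_ne_zero)
      exact ⟨j⟩
    have hG := strictMono_innerMap hcont h0 h1 hF hw hstep
    simp only [hopA, hstep, ← hsolve, integral_quantile_sum_stdGaussCDF_eq_innerMap hstep,
      hG.le_iff_le]

/-- For `μ = Σ w_j δ_{x_j}` finitely supported and `ν` satisfying
(A1)–(A3), a CDF `F` is a fixed point of `A` if and only if `F` is the CDF of
`Σ w_j δ_{y_j}` where `y_1 ≤ ⋯ ≤ y_n` solves the nonlinear system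
`∫ Q_ν(Σ_j w_j Φ(y_i − y_j − z)) φ(z) dz = x_i` for all `i`. -/
theorem stmt_16 (n : ℕ) (hn : 0 < n) (w : Fin n → ℝ) (x : Fin n → ℝ)
    (hw : ∀ j, 0 < w j) (hw1 : ∑ j, w j = 1) (hx : Monotone x)
    (μ ν : Measure ℝ) [IsProbabilityMeasure ν]
    (hμ : μ = ∑ j, ENNReal.ofReal (w j) • Measure.dirac (x j))
    (hA1 : ν ≪ volume)
    (hA2 : msupport μ ⊆ interior (convexHull ℝ (msupport ν)))
    (c : ℝ) (hc : 0 < c)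
    (hA3 : ∀ᵐ z ∂volume, z ∈ convexHull ℝ (msupport ν) →
      c ≤ (ν.rnDeriv volume z).toReal)
    (F : ℝ → ℝ) (hF : IsCDF F) :
    (∀ t, opA μ ν F t = F t) ↔
      ∃ y : Fin n → ℝ, Monotone y ∧
        (∀ t, F t = ∑ j, if y j ≤ t then w j else 0) ∧
        (∀ i, ∫ z, quantile ν (∑ j, w j * stdGaussCDF (y i - y j - z)) * stdGauss z
          = x i) :=
  stmt_16_general n w x hw hw1 hx μ ν hμ hA1 hA2 c hc hA3 F hF
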